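/- arXiv:2404.07201 — 2 statements merged into one kernel-verified Lean document; each statement's English description precedes it below -/
import Mathlib

section
/- Fractional decoding of Reed–Solomon-type codes (Theorem 3.3 for the projective line): let c_1,…,c_n ∈ K be pairwise distinct evaluation points, let h_i(x) = x^{i-1} for i ∈ {1,…,k} (so f_a(x) = Σ_{i=1}^k a_i x^{i-1} is a polynomial of degree < k over L), let A_1,…,A_m be pairwise disjoint subsets of {c_1,…,c_n} with |A_1 ∪ … ∪ A_m| ≥ k, and let p_t(x) = Π_{c ∈ A_t}(x − c) ∈ K[x] for t ∈ {1,…,m}. Let B ∈ ℕ satisfy 2B < n − (k−1) − (l−m)·max_{t ∈ {1,…,m}} |A_t|. Then for all a, a' ∈ L^k with a ≠ a' and all e, e' ∈ L^n of Hamming weight at most B, the downloaded m×n arrays of the received words w = (f_a(c_1)+e_1,…,f_a(c_n)+e_n) and w' = (f_{a'}(c_1)+e'_1,…,f_{a'}(c_n)+e'_n) are distinct; hence up to B errors can be corrected using only m·n symbols of K. -/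
/-!
Put `d = a - a'`. Where the two error vectors agree, the difference of the downloaded symbols
is `T_t(f_d)(c_i)`, so if the arrays coincide then each `T_t(f_d)`, of degree at most
`k - 1 + (l - m)·|A_t|`, has more than that many roots and vanishes identically. Read
`T_t(f_d) = 0` as a `p_t`-adic expansion: inductively, once `(f_d)_1, …, (f_d)_{j-1}` vanish,
`p_t` divides `(f_d)_j`, so `(f_d)_j` vanishes on `A_1 ∪ … ∪ A_m`, which has at least `k`
points; hence `(f_d)_j = 0`. Then `(f_d)_{l-m+t} · p_t^{l-m} = 0` as well, so every
`tr(ζ_s d_i)` vanishes. Finally `d_i = 0`: otherwise `y ↦ tr(y d_i)` would be a nonzero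
functional (it takes the value `1` at `ζ_1 ν_1 / d_i`) vanishing on the basis `ζ`.
-/

open Finset

noncomputable section

/-- `f_a(x) = Σ_{i=1}^k a_i h_i(x)`, with values `h_i(x) ∈ K` viewed in `L`. -/
def fa (K L : Type*) [Field K] [Field L] [Algebra K L] {X : Type*} {k : ℕ}
    (h : Fin k → X → K) (a : Fin k → L) (x : X) : L :=
  ∑ i, a i * algebraMap K L (h i x)

/-- The `s`-projection `(f_a)_s(x) = Σ_{i=1}^k tr(ζ_s a_i) h_i(x)`. -/
def sproj (K L : Type*) [Field K] [Field L] [Algebra K L] {X : Type*} {k : ℕ}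
    (h : Fin k → X → K) (ζ : ℕ → L) (a : Fin k → L) (s : ℕ) (x : X) : K :=
  ∑ i, Algebra.trace K L (ζ s * a i) * h i x

/-- `T_t(f_a) = (f_a)_{l-m+t}·p_t^{l-m} + Σ_{s=1}^{l-m} (f_a)_s·p_t^{s-1}`. -/
def Tt (K L : Type*) [Field K] [Field L] [Algebra K L] {X : Type*} {k : ℕ}
    (h : Fin k → X → K) (ζ : ℕ → L) (l m : ℕ) (p : ℕ → X → K)
    (a : Fin k → L) (t : ℕ) (x : X) : K :=
  sproj K L h ζ a (l - m + t) x * p t x ^ (l - m)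
    + ∑ s ∈ Icc 1 (l - m), sproj K L h ζ a s x * p t x ^ (s - 1)

/-- The downloaded symbol
`w_i^t = tr(ζ_{l-m+t} w_i)·p_t(c_i)^{l-m} + Σ_{s=1}^{l-m} tr(ζ_s w_i)·p_t(c_i)^{s-1}`. -/
def dl (K L : Type*) [Field K] [Field L] [Algebra K L] {X : Type*} {n : ℕ}
    (P : Fin n → X) (ζ : ℕ → L) (l m : ℕ) (p : ℕ → X → K)
    (w : Fin n → L) (i : Fin n) (t : ℕ) : K :=
  Algebra.trace K L (ζ (l - m + t) * w i) * p t (P i) ^ (l - m)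
    + ∑ s ∈ Icc 1 (l - m), Algebra.trace K L (ζ s * w i) * p t (P i) ^ (s - 1)

open Polynomial Lagrange

namespace FractionalDecoding

theorem card_filter_eq_add_hammingDist {ι : Type*} [Fintype ι] {β : ι → Type*}
    [∀ i, DecidableEq (β i)] (x y : ∀ i, β i) :
    #{i | x i = y i} + hammingDist x y = Fintype.card ι :=
  card_filter_add_card_filter_not _

theorem hammingDist_le_hammingNorm_add_hammingNorm {ι : Type*} [Fintype ι] {β : ι → Type*}
    [∀ i, DecidableEq (β i)] [∀ i, Zero (β i)] (x y : ∀ i, β i) :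
    hammingDist x y ≤ hammingNorm x + hammingNorm y := by
  simpa [hammingDist_comm 0 y] using hammingDist_triangle x 0 y

theorem dvd_of_mul_pow_add_sum_mul_pow_eq_zero {R : Type*} [CommRing R] [IsDomain R]
    {p q : R} {g : ℕ → R} {N j : ℕ} (hp : p ≠ 0) (hj : j ∈ Icc 1 N)
    (hlow : ∀ s ∈ Ico 1 j, g s = 0)
    (h : q * p ^ N + ∑ s ∈ Icc 1 N, g s * p ^ (s - 1) = 0) : p ∣ g j := by
  obtain ⟨hj1, hjN⟩ := mem_Icc.1 hj
  have hrest : p ^ j ∣ q * p ^ N + ∑ s ∈ (Icc 1 N).erase j, g s * p ^ (s - 1) := by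
    refine dvd_add (Dvd.dvd.mul_left (pow_dvd_pow p hjN) _) (dvd_sum fun s hs => ?_)
    obtain ⟨hsj, hs⟩ := mem_erase.1 hs
    obtain ⟨hs1, -⟩ := mem_Icc.1 hs
    rcases lt_or_gt_of_ne hsj with hlt | hgt
    · simp [hlow s (mem_Ico.2 ⟨hs1, hlt⟩)]
    · exact Dvd.dvd.mul_left (pow_dvd_pow p (by omega)) _
  have hterm : p ^ j ∣ g j * p ^ (j - 1) := by
    rw [← add_sum_erase _ _ hj] at h
    rw [show g j * p ^ (j - 1) = -(q * p ^ N + ∑ s ∈ (Icc 1 N).erase j, g s * p ^ (s - 1)) by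
      linear_combination h]
    exact (dvd_neg).2 hrest
  rw [← Nat.sub_add_cancel hj1, pow_succ, Nat.sub_add_cancel hj1, mul_comm (g j)] at hterm
  exact (mul_dvd_mul_iff_left (pow_ne_zero _ hp)).1 hterm

theorem eq_zero_of_forall_mul_pow_add_sum_mul_pow_eq_zero {R : Type*} [CommRing R] [IsDomain R]
    [DecidableEq R] {k N m : ℕ} {g : ℕ → R[X]} {A : ℕ → Finset R}
    (hg : ∀ s, (g s).degree < k) (hcard : k ≤ #((Icc 1 m).biUnion A))
    (hQ : ∀ t ∈ Icc 1 m,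
      g (N + t) * nodal (A t) id ^ N + ∑ s ∈ Icc 1 N, g s * nodal (A t) id ^ (s - 1) = 0) :
    ∀ s ∈ Icc 1 (N + m), g s = 0 := by
  have hlow : ∀ j ∈ Icc 1 N, g j = 0 := by
    intro j
    induction j using Nat.strong_induction_on with
    | _ j ih =>
      intro hj
      refine eq_zero_of_degree_lt_of_eval_finset_eq_zero _
        ((hg j).trans_le (by exact_mod_cast hcard)) fun y hy => ?_
      obtain ⟨t, ht, hyt⟩ := mem_biUnion.1 hy
      have hlow' : ∀ s ∈ Ico 1 j, g s = 0 := fun s hs =>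
        ih s (mem_Ico.1 hs).2 (mem_Icc.2 ⟨(mem_Ico.1 hs).1, by grind⟩)
      exact eval_eq_zero_of_dvd_of_eval_eq_zero
        (dvd_of_mul_pow_add_sum_mul_pow_eq_zero nodal_ne_zero hj hlow' (hQ t ht))
        (eval_nodal_at_node (v := id) hyt)
  intro s hs
  obtain ⟨hs1, hsm⟩ := mem_Icc.1 hs
  by_cases hsN : s ≤ N
  · exact hlow s (mem_Icc.2 ⟨hs1, hsN⟩)
  have ht : s - N ∈ Icc 1 m := mem_Icc.2 ⟨by omega, by omega⟩
  have h := hQ _ ht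
  rw [sum_eq_zero fun s hs => by rw [hlow s hs, zero_mul], add_zero,
    Nat.add_sub_cancel' (by omega)] at h
  exact (mul_eq_zero.1 h).resolve_right (pow_ne_zero _ nodal_ne_zero)

theorem eq_zero_of_forall_trace_basis_mul_eq_zero {K L ι : Type*} [Field K] [Field L]
    [Algebra K L] (b : Module.Basis ι K L) (htr : Algebra.trace K L ≠ 0) {x : L}
    (hx : ∀ i, Algebra.trace K L (b i * x) = 0) : x = 0 := by
  by_contra hx0
  have h : (Algebra.trace K L).comp (LinearMap.mulRight K x) = 0 :=
    b.ext fun i => by simpa using hx i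
  refine htr (LinearMap.ext fun y => ?_)
  simpa [hx0] using LinearMap.congr_fun h (y * x⁻¹)

variable {K L : Type*} [Field K] [Field L] [Algebra K L]

theorem trace_mul_fa {X : Type*} {k : ℕ} (h : Fin k → X → K) (ζ : ℕ → L) (a : Fin k → L)
    (s : ℕ) (x : X) :
    Algebra.trace K L (ζ s * fa K L h a x) = sproj K L h ζ a s x := by
  simp only [fa, sproj, mul_sum, map_sum]
  refine sum_congr rfl fun i _ => ?_
  rw [mul_left_comm, ← Algebra.commutes, ← Algebra.smul_def, mul_smul_comm, map_smul, smul_eq_mul,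
    mul_comm, mul_comm (a i)]

theorem fa_sub {X : Type*} {k : ℕ} (h : Fin k → X → K) (a a' : Fin k → L) (x : X) :
    fa K L h (a - a') x = fa K L h a x - fa K L h a' x := by
  simp [fa, sub_mul, sum_sub_distrib]

theorem dl_sub_dl_eq_Tt {X : Type*} {n k : ℕ} (P : Fin n → X) (h : Fin k → X → K)
    (ζ : ℕ → L) (l m : ℕ) (p : ℕ → X → K) {w w' : Fin n → L} {a : Fin k → L} {i : Fin n}
    (hi : w i - w' i = fa K L h a (P i)) (t : ℕ) :
    dl K L P ζ l m p w i t - dl K L P ζ l m p w' i t = Tt K L h ζ l m p a t (P i) := by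
  simp only [dl, Tt, ← trace_mul_fa, ← hi, mul_sub, map_sub, sub_mul, sum_sub_distrib]
  ring

variable (K) in
/-- `(f_a)_s` for `h_i(x) = x^{i-1}`, as a polynomial. -/
def sprojPoly {k : ℕ} (ζ : ℕ → L) (a : Fin k → L) (s : ℕ) : K[X] :=
  ∑ i : Fin k, C (Algebra.trace K L (ζ s * a i)) * X ^ (i : ℕ)

theorem eval_sprojPoly {k : ℕ} (ζ : ℕ → L) (a : Fin k → L) (s : ℕ) (x : K) :
    (sprojPoly K ζ a s).eval x = sproj K L (fun (i : Fin k) (x : K) => x ^ (i : ℕ)) ζ a s x := by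
  simp [sprojPoly, sproj, eval_finsetSum]

theorem coeff_sprojPoly {k : ℕ} (ζ : ℕ → L) (a : Fin k → L) (s : ℕ) (i : Fin k) :
    (sprojPoly K ζ a s).coeff i = Algebra.trace K L (ζ s * a i) := by
  simp [sprojPoly, Fin.val_inj]

theorem degree_sprojPoly_lt {k : ℕ} (ζ : ℕ → L) (a : Fin k → L) (s : ℕ) :
    (sprojPoly K ζ a s).degree < k :=
  degree_sum_fin_lt _

theorem natDegree_sprojPoly_le {k : ℕ} (ζ : ℕ → L) (a : Fin k → L) (s : ℕ) :
    (sprojPoly K ζ a s).natDegree ≤ k - 1 :=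
  natDegree_sum_le_of_forall_le _ _ fun i _ =>
    (natDegree_C_mul_X_pow_le _ _).trans (by have := i.isLt; omega)

variable (K) in
/-- `T_t(f_a)` for `h_i(x) = x^{i-1}`, as a polynomial in `p_t = P t`. -/
def TtPoly {k : ℕ} (ζ : ℕ → L) (l m : ℕ) (P : ℕ → K[X]) (a : Fin k → L) (t : ℕ) : K[X] :=
  sprojPoly K ζ a (l - m + t) * P t ^ (l - m)
    + ∑ s ∈ Icc 1 (l - m), sprojPoly K ζ a s * P t ^ (s - 1)

theorem eval_TtPoly {k : ℕ} (ζ : ℕ → L) (l m : ℕ) (P : ℕ → K[X]) (a : Fin k → L) (t : ℕ)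
    (x : K) :
    (TtPoly K ζ l m P a t).eval x
      = Tt K L (fun (i : Fin k) (x : K) => x ^ (i : ℕ)) ζ l m (fun t x => (P t).eval x) a t x := by
  simp [TtPoly, Tt, eval_finsetSum, eval_sprojPoly]

theorem natDegree_TtPoly_le {k : ℕ} (ζ : ℕ → L) (l m : ℕ) {P : ℕ → K[X]} (a : Fin k → L)
    {t D : ℕ} (hP : (P t).natDegree ≤ D) :
    (TtPoly K ζ l m P a t).natDegree ≤ (k - 1) + (l - m) * D := by
  have hterm : ∀ s e, e ≤ l - m →
      (sprojPoly K ζ a s * P t ^ e).natDegree ≤ (k - 1) + (l - m) * D := fun s e he =>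
    natDegree_mul_le.trans (add_le_add (natDegree_sprojPoly_le ζ a s)
      (natDegree_pow_le.trans (Nat.mul_le_mul he hP)))
  exact (natDegree_add_le _ _).trans (max_le (hterm _ _ le_rfl)
    (natDegree_sum_le_of_forall_le _ _ fun s hs => hterm _ _ (by grind)))

end FractionalDecoding

open FractionalDecoding

theorem fractional_decoding_reed_solomon_general
    (K L : Type*) [Field K] [DecidableEq K] [Field L] [Algebra K L]
    [DecidableEq L]
    (l : ℕ) (hl : 1 ≤ l)
    (ζ ν : ℕ → L) (bζ : Module.Basis (Fin l) K L) (hbζ : ∀ s : Fin l, bζ s = ζ (s.1 + 1))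
    (hdual : ∀ s ∈ Icc 1 l, ∀ j ∈ Icc 1 l,
      Algebra.trace K L (ζ s * ν j) = if s = j then 1 else 0)
    (m : ℕ) (k : ℕ)
    (n : ℕ) (c : Fin n → K) (hc : Function.Injective c)
    (A : ℕ → Finset K)
    (hcard : k ≤ ((Icc 1 m).biUnion A).card)
    (B : ℕ)
    (hB : 2 * B + (k - 1) + (l - m) * ((Icc 1 m).sup fun t => (A t).card) < n) :
    ∀ a a' : Fin k → L, a ≠ a' → ∀ e e' : Fin n → L,
      hammingNorm e ≤ B → hammingNorm e' ≤ B →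
      ∃ t ∈ Icc 1 m, ∃ i : Fin n,
        dl K L c ζ l m (fun t x => ∏ y ∈ A t, (x - y))
            (fun j => fa K L (fun (i : Fin k) (x : K) => x ^ (i : ℕ)) a (c j) + e j) i t
          ≠ dl K L c ζ l m (fun t x => ∏ y ∈ A t, (x - y))
            (fun j => fa K L (fun (i : Fin k) (x : K) => x ^ (i : ℕ)) a' (c j) + e' j) i t := by
  intro a a' hne e e' he he'
  by_contra! hsame
  have hp : (fun t x => ∏ y ∈ A t, (x - y)) = fun t x => (nodal (A t) id).eval x := by
    simp [eval_nodal]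
  have hagree : n - 2 * B ≤ #{i | e i = e' i} := by
    have := card_filter_eq_add_hammingDist e e'
    have := hammingDist_le_hammingNorm_add_hammingNorm e e'
    simp only [Fintype.card_fin] at *
    omega
  have hT : ∀ t ∈ Icc 1 m, TtPoly K ζ l m (fun t => nodal (A t) id) (a - a') t = 0 := by
    intro t ht
    refine eq_zero_of_natDegree_lt_card_of_eval_eq_zero' _ (({i | e i = e' i} : Finset _).image c)
      ?_ ?_
    · simp only [mem_image, mem_filter, mem_univ, true_and]
      rintro _ ⟨i, hi, rfl⟩
      rw [eval_TtPoly, ← hp]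
      exact (dl_sub_dl_eq_Tt c _ ζ l m _ (by simp [fa_sub, hi]) t).symm.trans
        (sub_eq_zero.2 (hsame t ht i))
    · rw [card_image_of_injective _ hc]
      have hdeg := natDegree_TtPoly_le (P := fun t => nodal (A t) id) ζ l m (a - a')
        (natDegree_nodal.trans_le (le_sup (f := fun t => #(A t)) ht))
      omega
  have hproj := eq_zero_of_forall_mul_pow_add_sum_mul_pow_eq_zero
    (fun s => degree_sprojPoly_lt ζ (a - a') s) hcard hT
  have htr : Algebra.trace K L ≠ 0 := fun h0 => by
    simpa [h0] using hdual 1 (mem_Icc.2 ⟨le_rfl, hl⟩) 1 (mem_Icc.2 ⟨le_rfl, hl⟩)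
  refine hne (funext fun i => sub_eq_zero.1 ?_)
  refine eq_zero_of_forall_trace_basis_mul_eq_zero bζ htr fun s => ?_
  rw [hbζ, ← Pi.sub_apply, ← coeff_sprojPoly,
    hproj _ (mem_Icc.2 ⟨by omega, by have := s.isLt; omega⟩), coeff_zero]

/-- Theorem 3.3 for the projective line: fractional decoding of
Reed–Solomon-type codes, with `h_i(x) = x^{i-1}` and
`p_t(x) = Π_{c ∈ A_t} (x - c)`: if `2B < n - (k-1) - (l-m)·max_t |A_t|`, then
received words from distinct messages with at most `B` errors each download to
distinct `m × n` arrays, so up to `B` errors can be corrected using only `m·n`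
symbols of `K`. -/
theorem fractional_decoding_reed_solomon
    (K L : Type*) [Field K] [Fintype K] [DecidableEq K] [Field L] [Algebra K L]
    [DecidableEq L]
    (l : ℕ) (hl : 1 ≤ l) (hdim : Module.finrank K L = l)
    (ζ ν : ℕ → L) (bζ : Module.Basis (Fin l) K L) (hbζ : ∀ s : Fin l, bζ s = ζ (s.1 + 1))
    (hdual : ∀ s ∈ Icc 1 l, ∀ j ∈ Icc 1 l,
      Algebra.trace K L (ζ s * ν j) = if s = j then 1 else 0)
    (m : ℕ) (hm1 : 1 ≤ m) (hm : m < l)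
    (k : ℕ) (hk : 1 ≤ k)
    (n : ℕ) (c : Fin n → K) (hc : Function.Injective c)
    (A : ℕ → Finset K)
    (hA : ∀ t ∈ Icc 1 m, ∀ y ∈ A t, ∃ i : Fin n, c i = y)
    (hdisj : ∀ t ∈ Icc 1 m, ∀ t' ∈ Icc 1 m, t ≠ t' → Disjoint (A t) (A t'))
    (hcard : k ≤ ((Icc 1 m).biUnion A).card)
    (B : ℕ)
    (hB : 2 * B + (k - 1) + (l - m) * ((Icc 1 m).sup fun t => (A t).card) < n) :
    ∀ a a' : Fin k → L, a ≠ a' → ∀ e e' : Fin n → L,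
      hammingNorm e ≤ B → hammingNorm e' ≤ B →
      ∃ t ∈ Icc 1 m, ∃ i : Fin n,
        dl K L c ζ l m (fun t x => ∏ y ∈ A t, (x - y))
            (fun j => fa K L (fun (i : Fin k) (x : K) => x ^ (i : ℕ)) a (c j) + e j) i t
          ≠ dl K L c ζ l m (fun t x => ∏ y ∈ A t, (x - y))
            (fun j => fa K L (fun (i : Fin k) (x : K) => x ^ (i : ℕ)) a' (c j) + e' j) i t :=
  fractional_decoding_reed_solomon_general K L l hl ζ ν bζ hbζ hdual m k n c hc A hcard B hB

end
end

section
/- Row codewords of the Reed–Solomon-type virtual projection have large minimum distance: let c_1,…,c_n ∈ K be pairwise distinct, let h_i(x) = x^{i-1} for i ∈ {1,…,k}, let A_t ⊆ {c_1,…,c_n} and p_t(x) = Π_{c ∈ A_t}(x − c) ∈ K[x]. Then for every a ∈ L^k, T_t(f_a) ∈ K[x] is a polynomial of degree at most (k−1) + (l−m)·|A_t|, and consequently for any a, a' ∈ L^k, either T_t(f_a) = T_t(f_{a'}) as polynomials, or the vectors (T_t(f_a)(c_1),…,T_t(f_a)(c_n)) and (T_t(f_{a'})(c_1),…,T_t(f_{a'})(c_n))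 in K^n differ in at least n − (k−1) − (l−m)·|A_t| coordinates. -/
/-!
Each projection `(f_a)_s` has degree at most `k - 1` and `p_t` has degree `|A_t|`, so every
summand of `T_t(f_a)`, hence `T_t(f_a)` itself, has degree at most `(k - 1) + (l - m)|A_t|`.
If `T_t(f_a) ≠ T_t(f_{a'})`, their difference is a nonzero polynomial of at most that degree, so
it vanishes at no more than that many of the distinct points `c_i`: this is the Reed–Solomon
distance bound.
-/

open Finset Polynomial

noncomputable section

/-- The `s`-projection of `f_a(x) = Σ_{i=1}^k a_i x^{i-1}` as a polynomial:
`(f_a)_s(x) = Σ_{i=1}^k tr(ζ_s a_i) x^{i-1} ∈ K[x]`. -/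
def sprojRS (K L : Type*) [Field K] [Field L] [Algebra K L] {k : ℕ}
    (ζ : ℕ → L) (a : Fin k → L) (s : ℕ) : Polynomial K :=
  ∑ i : Fin k, Polynomial.C (Algebra.trace K L (ζ s * a i)) * Polynomial.X ^ (i : ℕ)

/-- `T_t(f_a) = (f_a)_{l-m+t}·p_t^{l-m} + Σ_{s=1}^{l-m} (f_a)_s·p_t^{s-1} ∈ K[x]`,
where `p_t(x) = Π_{c ∈ A}(x − c)`. -/
def TtRS (K L : Type*) [Field K] [Field L] [Algebra K L] {k : ℕ}
    (ζ : ℕ → L) (l m : ℕ) (A : Finset K) (a : Fin k → L) (t : ℕ) : Polynomial K :=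
  sprojRS K L ζ a (l - m + t) * (∏ y ∈ A, (Polynomial.X - Polynomial.C y)) ^ (l - m)
    + ∑ s ∈ Icc 1 (l - m),
        sprojRS K L ζ a s * (∏ y ∈ A, (Polynomial.X - Polynomial.C y)) ^ (s - 1)

namespace Polynomial

theorem natDegree_mul_pow_le_of_le {R : Type*} [Semiring R] {f p : R[X]} {d e j J : ℕ}
    (hf : f.natDegree ≤ d) (hp : p.natDegree ≤ e) (hj : j ≤ J) :
    (f * p ^ j).natDegree ≤ d + J * e :=
  natDegree_mul_le_of_le hf <| (natDegree_pow_le_of_le j hp).trans <| Nat.mul_le_mul_right e hj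

variable {R : Type*} [CommRing R] [IsDomain R] [DecidableEq R] {ι : Type*} [Fintype ι]
  {c : ι → R}

theorem card_filter_eval_eq_zero_le_natDegree (hc : Function.Injective c) {p : R[X]}
    (hp : p ≠ 0) : #{i | p.eval (c i) = 0} ≤ p.natDegree := by
  rw [← card_image_of_injective _ hc]
  refine card_le_degree_of_subset_roots fun y hy => ?_
  obtain ⟨i, hi, rfl⟩ := mem_image.mp hy
  exact (mem_roots hp).mpr (mem_filter.mp hi).2

theorem card_sub_natDegree_le_hammingNorm_eval (hc : Function.Injective c) {p : R[X]}
    (hp : p ≠ 0) : Fintype.card ι - p.natDegree ≤ hammingNorm fun i => p.eval (c i) := by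
  have hsplit := card_filter_add_card_filter_not (s := univ) fun i => p.eval (c i) = 0
  have hzeros := card_filter_eval_eq_zero_le_natDegree hc hp
  rw [card_univ] at hsplit
  simp only [hammingNorm, ne_eq]
  omega

theorem eq_or_card_sub_le_hammingDist_eval (hc : Function.Injective c)
    {p q : R[X]} {d : ℕ} (hp : p.natDegree ≤ d) (hq : q.natDegree ≤ d) :
    p = q ∨
      Fintype.card ι - d ≤ hammingDist (fun i => p.eval (c i)) (fun i => q.eval (c i)) := by
  refine or_iff_not_imp_left.mpr fun hpq => ?_
  have hdeg : (p - q).natDegree ≤ d := (natDegree_sub_le p q).trans (max_le hp hq)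
  calc Fintype.card ι - d ≤ Fintype.card ι - (p - q).natDegree := by omega
    _ ≤ hammingNorm fun i => (p - q).eval (c i) :=
      card_sub_natDegree_le_hammingNorm_eval hc (sub_ne_zero.mpr hpq)
    _ = hammingDist (fun i => p.eval (c i)) (fun i => q.eval (c i)) := by
      rw [hammingDist_comm, hammingDist_eq_hammingNorm, neg_add_eq_sub]
      simp only [eval_sub, Pi.sub_def]

end Polynomial

theorem natDegree_sprojRS_le (K L : Type*) [Field K] [Field L] [Algebra K L] {k : ℕ}
    (ζ : ℕ → L) (a : Fin k → L) (s : ℕ) : (sprojRS K L ζ a s).natDegree ≤ k - 1 :=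
  natDegree_sum_le_of_forall_le _ _ fun i _ =>
    (natDegree_C_mul_X_pow_le _ _).trans (Nat.le_sub_one_of_lt i.2)

theorem natDegree_TtRS_le (K L : Type*) [Field K] [Field L] [Algebra K L] {k : ℕ}
    (ζ : ℕ → L) (l m : ℕ) (A : Finset K) (a : Fin k → L) (t : ℕ) :
    (TtRS K L ζ l m A a t).natDegree ≤ (k - 1) + (l - m) * #A := by
  have hp : (∏ y ∈ A, (X - C y)).natDegree ≤ #A :=
    (natDegree_finsetProd_X_sub_C_eq_card A id).le
  refine natDegree_add_le_of_degree_le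
    (natDegree_mul_pow_le_of_le (natDegree_sprojRS_le K L ζ a _) hp le_rfl)
    (natDegree_sum_le_of_forall_le _ _ fun s hs => ?_)
  exact natDegree_mul_pow_le_of_le (natDegree_sprojRS_le K L ζ a _) hp
    (by have := (mem_Icc.mp hs).2; omega)

theorem row_codewords_min_distance_general
    (K L : Type*) [Field K] [DecidableEq K] [Field L] [Algebra K L]
    (l : ℕ)
    (ζ : ℕ → L)
    (m : ℕ) (t : ℕ)
    (k : ℕ) (n : ℕ) (c : Fin n → K) (hc : Function.Injective c)
    (A : Finset K) :
    (∀ a : Fin k → L,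
        (TtRS K L ζ l m A a t).natDegree ≤ (k - 1) + (l - m) * A.card)
    ∧ (∀ a a' : Fin k → L,
        TtRS K L ζ l m A a t = TtRS K L ζ l m A a' t
        ∨ n - (k - 1) - (l - m) * A.card
            ≤ hammingDist (fun i : Fin n => (TtRS K L ζ l m A a t).eval (c i))
                (fun i : Fin n => (TtRS K L ζ l m A a' t).eval (c i))) := by
  refine ⟨fun a => natDegree_TtRS_le K L ζ l m A a t, fun a a' => ?_⟩
  have := eq_or_card_sub_le_hammingDist_eval hc (natDegree_TtRS_le K L ζ l m A a t)
    (natDegree_TtRS_le K L ζ l m A a' t)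
  rwa [Fintype.card_fin, ← Nat.sub_sub] at this

/-- each row codeword of the Reed–Solomon-type virtual projection
comes from a polynomial `T_t(f_a)` of degree at most `(k−1) + (l−m)·|A_t|`, so two
rows either coincide as polynomials or differ in at least
`n − (k−1) − (l−m)·|A_t|` coordinates. -/
theorem row_codewords_min_distance
    (K L : Type*) [Field K] [Fintype K] [DecidableEq K] [Field L] [Algebra K L]
    (l : ℕ) (hl : 1 ≤ l) (hdim : Module.finrank K L = l)
    (ζ : ℕ → L) (bζ : Module.Basis (Fin l) K L) (hbζ : ∀ s : Fin l, bζ s = ζ (s.1 + 1))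
    (m : ℕ) (hm1 : 1 ≤ m) (hm : m < l) (t : ℕ) (ht : t ∈ Icc 1 m)
    (k : ℕ) (n : ℕ) (c : Fin n → K) (hc : Function.Injective c)
    (A : Finset K) (hA : ∀ y ∈ A, ∃ i : Fin n, c i = y) :
    (∀ a : Fin k → L,
        (TtRS K L ζ l m A a t).natDegree ≤ (k - 1) + (l - m) * A.card)
    ∧ (∀ a a' : Fin k → L,
        TtRS K L ζ l m A a t = TtRS K L ζ l m A a' t
        ∨ n - (k - 1) - (l - m) * A.card
            ≤ hammingDist (fun i : Fin n => (TtRS K L ζ l m A a t).eval (c i))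
                (fun i : Fin n => (TtRS K L ζ l m A a' t).eval (c i))) :=
  row_codewords_min_distance_general K L l ζ m t k n c hc A

end
end
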